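/- Let 1 ≤ i ≤ n−1 and let ε and ε' be sign vectors that differ at exactly the index i+1 (i.e., ε'_{i+1} = −ε_{i+1} and ε'_l = ε_l for l ≠ i+1). Then Y^ε_i ∩ Y^{ε'}_{i+1} = F^ε_{i,i+1} = F^{ε'}_{i+1,i+1}. -/
import Mathlib


noncomputable section

open Set

/-- The brick `Y^ε_i ⊆ S^n` (coordinate indices are 0-based, so the 1-based
condition `k ≤ i` becomes `(k : ℕ) < i`, and `k ≥ i+1` becomes `i ≤ (k : ℕ)`). -/
def Ybrick (n : ℕ) (ε : Fin (n + 1) → ℝ) (i : ℕ) : Set (EuclideanSpace ℝ (Fin (n + 1))) :=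
  {v | ‖v‖ = 1 ∧ (∀ k, 0 ≤ ε k * v k) ∧
    (∃ k : Fin (n + 1), (k : ℕ) < i ∧ v k ≠ 0) ∧
    (∃ k : Fin (n + 1), i ≤ (k : ℕ) ∧ v k ≠ 0)}

/-- The `j`-th face `F^ε_{i,j}` of `Y^ε_i`. -/
def Fface (n : ℕ) (ε : Fin (n + 1) → ℝ) (i : ℕ) (j : Fin (n + 1)) :
    Set (EuclideanSpace ℝ (Fin (n + 1))) :=
  {v ∈ Ybrick n ε i | v j = 0}

/-- For `1 ≤ i ≤ n - 1`, if `ε'` differs from `ε` exactly at the `(i+1)`-st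
coordinate (the 0-based index `k` with `(k : ℕ) = i`), then
`Y^ε_i ∩ Y^{ε'}_{i+1} = F^ε_{i,i+1} = F^{ε'}_{i+1,i+1}`. -/
theorem Ybrick_inter_Ybrick_up (n : ℕ) (hn : 1 ≤ n) (i : ℕ) (hi1 : 1 ≤ i)
    (hin : i ≤ n - 1)
    (ε ε' : Fin (n + 1) → ℝ) (hε : ∀ k, ε k = 1 ∨ ε k = -1)
    (hε' : ∀ k, ε' k = 1 ∨ ε' k = -1) (k : Fin (n + 1)) (hk : (k : ℕ) = i)
    (hflip : ε' k = -ε k) (hagree : ∀ l : Fin (n + 1), l ≠ k → ε' l = ε l) :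
    Ybrick n ε i ∩ Ybrick n ε' (i + 1) = Fface n ε i k ∧
      Fface n ε i k = Fface n ε' (i + 1) k := by

  have key12 : ∀ v : EuclideanSpace ℝ (Fin (n + 1)),
      v ∈ Ybrick n ε i → v k = 0 → v ∈ Ybrick n ε' (i + 1) := by
    rintro v ⟨hnorm, hsign, ⟨l1, hl1, hv1⟩, ⟨l2, hl2, hv2⟩⟩ hvk
    refine ⟨hnorm, ?_, ⟨l1, by omega, hv1⟩, ?_⟩
    · intro l
      by_cases hlk : l = k
      · subst hlk; rw [hvk, mul_zero]
      · rw [hagree l hlk]; exact hsign l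
    · refine ⟨l2, ?_, hv2⟩
      have : l2 ≠ k := fun h => hv2 (h ▸ hvk)
      have : (l2 : ℕ) ≠ i := fun h => this (Fin.ext (by omega))
      omega
  have key21 : ∀ v : EuclideanSpace ℝ (Fin (n + 1)),
      v ∈ Ybrick n ε' (i + 1) → v k = 0 → v ∈ Ybrick n ε i := by
    rintro v ⟨hnorm, hsign, ⟨l1, hl1, hv1⟩, ⟨l2, hl2, hv2⟩⟩ hvk
    refine ⟨hnorm, ?_, ?_, ⟨l2, by omega, hv2⟩⟩
    · intro l
      by_cases hlk : l = k
      · subst hlk; rw [hvk, mul_zero]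
      · rw [← hagree l hlk]; exact hsign l
    · refine ⟨l1, ?_, hv1⟩
      have : l1 ≠ k := fun h => hv1 (h ▸ hvk)
      have : (l1 : ℕ) ≠ i := fun h => this (Fin.ext (by omega))
      omega
  constructor
  · ext v
    constructor
    · rintro ⟨hv1, hv2⟩
      have h1 : 0 ≤ ε k * v k := hv1.2.1 k
      have h2 : 0 ≤ ε' k * v k := hv2.2.1 k
      have hvk : v k = 0 := by
        rw [hflip] at h2
        rcases hε k with h | h <;> rw [h] at h1 h2 <;> nlinarith
      exact ⟨hv1, hvk⟩
    · rintro ⟨hv, hvk⟩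
      exact ⟨hv, key12 v hv hvk⟩
  · ext v
    constructor
    · rintro ⟨hv, hvk⟩
      exact ⟨key12 v hv hvk, hvk⟩
    · rintro ⟨hv, hvk⟩
      exact ⟨key21 v hv hvk, hvk⟩
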